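/- Let P > 0, and let o₁ ≤ o₂ ≤ … ≤ oₙ ≤ P and l₁, …, lₙ ≥ 0 be real numbers. Define f(t) = Σ_{j=1}^{n} lⱼ·⌈(t−oⱼ)/P⌉ and ρ = (Σ_{j=1}^{n} lⱼ)/P, and for each k define σₖ = Σ_{j=1}^{k} lⱼ − ρ·oₖ. Then for all t ≥ 0, f(t) ≤ ρ·t + max{σ₁, …, σₙ}. -/

import Mathlib

/-!
Write `t = m P + s` with `m ∈ ℤ`. If the offsets split at an index `k` so that `s - P ≤ oⱼ`
for `j ≤ k` and `s ≤ oⱼ` for `j > k`, then every term `⌈(t - oⱼ)/P⌉` is at most `m + 1`,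
resp. `m`, so `f t ≤ m Σⱼ lⱼ + Σ_{j ≤ k} lⱼ`, while `ρ t = m Σⱼ lⱼ + ρ s`; if moreover
`oₖ ≤ s`, this is at most `ρ t + σₖ`. Such a split always exists: for `s = t mod P`, take
`k` the largest index with `oₖ < s`; if there is none, take `s = t mod P + P` and `k` the
last index.
-/

open Finset

theorem Int.ceil_sub_div_le_iff {K : Type*} [Field K] [LinearOrder K] [IsStrictOrderedRing K]
    [FloorRing K] {P : K} (hP : 0 < P) (t o : K) (m : ℤ) :
    ⌈(t - o) / P⌉ ≤ m ↔ t - m * P ≤ o := by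
  rw [Int.ceil_le, div_le_iff₀ hP]
  constructor <;> intro h <;> linarith

theorem staircase_le_of_split {n : ℕ} {P : ℝ} {o l : Fin n → ℝ} (hP : 0 < P)
    (hl : ∀ j, 0 ≤ l j) (t : ℝ) (m : ℤ) (k : Fin n)
    (hlow : ∀ j ≤ k, t - m * P - P ≤ o j) (hhigh : ∀ j, k < j → t - m * P ≤ o j)
    (hk : o k ≤ t - m * P) :
    ∑ j, l j * ⌈(t - o j) / P⌉ ≤
      (∑ j, l j) / P * t + ((∑ j, if j ≤ k then l j else 0) - (∑ j, l j) / P * o k) := by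
  have hρ : 0 ≤ (∑ j, l j) / P := div_nonneg (sum_nonneg fun j _ => hl j) hP.le
  have hterm (j : Fin n) :
      l j * (⌈(t - o j) / P⌉ : ℝ) ≤ l j * m + (if j ≤ k then l j else 0) := by
    split_ifs with hjk
    · have : ⌈(t - o j) / P⌉ ≤ m + 1 :=
        (Int.ceil_sub_div_le_iff hP _ _ _).2 (by push_cast; linarith [hlow j hjk])
      have : (⌈(t - o j) / P⌉ : ℝ) ≤ m + 1 := by exact_mod_cast this
      nlinarith [hl j]
    · have : ⌈(t - o j) / P⌉ ≤ m :=
        (Int.ceil_sub_div_le_iff hP _ _ _).2 (hhigh j (not_le.1 hjk))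
      have : (⌈(t - o j) / P⌉ : ℝ) ≤ m := by exact_mod_cast this
      nlinarith [hl j]
  have hρt : (∑ j, l j) / P * t = (∑ j, l j) * m + (∑ j, l j) / P * (t - m * P) := by
    field_simp
    ring
  calc ∑ j, l j * (⌈(t - o j) / P⌉ : ℝ)
      ≤ ∑ j, (l j * m + if j ≤ k then l j else 0) := sum_le_sum fun j _ => hterm j
    _ = (∑ j, l j) * m + ∑ j, (if j ≤ k then l j else 0) := by
      rw [sum_add_distrib, sum_mul]
    _ ≤ _ := by nlinarith [mul_le_mul_of_nonneg_left hk hρ]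

theorem staircase_linear_bound_general (n : ℕ) (hn : 0 < n) (P : ℝ) (hP : 0 < P)
    (o l : Fin n → ℝ) (hoP : ∀ j, o j ≤ P) (hoNN : ∀ j, 0 ≤ o j)
    (hl : ∀ j, 0 ≤ l j) :
    ∀ t : ℝ, 0 ≤ t →
      (∑ j : Fin n, l j * ⌈(t - o j) / P⌉) ≤
        ((∑ j : Fin n, l j) / P) * t +
          (Finset.univ.sup' (Finset.univ_nonempty_iff.mpr ⟨⟨0, hn⟩⟩)
            (fun k : Fin n =>
              (∑ j : Fin n, if j ≤ k then l j else 0) - ((∑ j : Fin n, l j) / P) * o k)) := by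
  intro t _
  set m := ⌊t / P⌋
  have hs0 : 0 ≤ t - m * P := Int.sub_floor_div_mul_nonneg t hP
  have hsP : t - m * P < P := Int.sub_floor_div_mul_lt t hP
  suffices ∃ (m' : ℤ) (k : Fin n), (∀ j ≤ k, t - m' * P - P ≤ o j) ∧
      (∀ j, k < j → t - m' * P ≤ o j) ∧ o k ≤ t - m' * P by
    obtain ⟨m', k, hlow, hhigh, hk⟩ := this
    refine (staircase_le_of_split hP hl t m' k hlow hhigh hk).trans ?_
    gcongr
    exact (le_sup'_iff _).2 ⟨k, mem_univ k, le_rfl⟩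
  by_cases hbelow : ∃ j, o j < t - m * P
  · obtain ⟨j₀, hj₀⟩ := hbelow
    have hS : (univ.filter fun j => o j < t - m * P).Nonempty := ⟨j₀, by simpa using hj₀⟩
    set k := (univ.filter fun j => o j < t - m * P).max' hS
    refine ⟨m, k, fun j _ => by linarith [hoNN j], fun j hkj => ?_,
      (mem_filter.1 (max'_mem _ hS)).2.le⟩
    by_contra! hj
    exact hkj.not_ge (le_max' _ j (by simpa using hj))
  · simp only [not_exists, not_lt] at hbelow
    set k := (univ : Finset (Fin n)).max' (univ_nonempty_iff.mpr ⟨⟨0, hn⟩⟩)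
    refine ⟨m - 1, k, fun j _ => ?_, fun j hkj => (hkj.not_ge (le_max' _ j (mem_univ j))).elim,
      ?_⟩
    · push_cast; linarith [hbelow j]
    · push_cast; linarith [hoP k]

/-- Linear bound on a staircase function (Lemma 5): with `P > 0`,
ordered offsets `o₁ ≤ ⋯ ≤ oₙ ≤ P`, nonnegative heights `lⱼ`,
`f(t) = Σⱼ lⱼ⌈(t−oⱼ)/P⌉`, `ρ = (Σⱼ lⱼ)/P`, `σₖ = Σ_{j≤k} lⱼ − ρ oₖ`,
one has `f(t) ≤ ρ t + max σₖ` for all `t ≥ 0`. -/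
theorem staircase_linear_bound (n : ℕ) (hn : 0 < n) (P : ℝ) (hP : 0 < P)
    (o l : Fin n → ℝ) (ho : Monotone o) (hoP : ∀ j, o j ≤ P) (hoNN : ∀ j, 0 ≤ o j)
    (hl : ∀ j, 0 ≤ l j) :
    ∀ t : ℝ, 0 ≤ t →
      (∑ j : Fin n, l j * ⌈(t - o j) / P⌉) ≤
        ((∑ j : Fin n, l j) / P) * t +
          (Finset.univ.sup' (Finset.univ_nonempty_iff.mpr ⟨⟨0, hn⟩⟩)
            (fun k : Fin n =>
              (∑ j : Fin n, if j ≤ k then l j else 0) - ((∑ j : Fin n, l j) / P) * o k)) :=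
  staircase_linear_bound_general n hn P hP o l hoP hoNN hl
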